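/- arXiv:2410.08838 — 2 statements merged into one kernel-verified Lean document; each statement's English description precedes it below -/
import Mathlib

section
/- Let H be an infinite-dimensional complex separable Hilbert space and let T ∈ B(H) be hypercyclic. Then T satisfies property (V_E) if and only if E(T) = ∅. -/
noncomputable section

open Set MeasureTheory

/-- The operator `T - λ·I`. -/
def opShift {E : Type*} [NormedAddCommGroup E] [InnerProductSpace ℂ E]
    (T : E →L[ℂ] E) (lam : ℂ) : E →L[ℂ] E :=
  T - lam • ContinuousLinearMap.id ℂ E

/-- Upper semi-Fredholm: closed range and finite-dimensional kernel. -/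
def IsUSF {E : Type*} [NormedAddCommGroup E] [InnerProductSpace ℂ E]
    (T : E →L[ℂ] E) : Prop :=
  IsClosed (LinearMap.range (T : E →ₗ[ℂ] E) : Set E) ∧ FiniteDimensional ℂ (LinearMap.ker (T : E →ₗ[ℂ] E))

/-- Lower semi-Fredholm: closed range and finite codimension. -/
def IsLSF {E : Type*} [NormedAddCommGroup E] [InnerProductSpace ℂ E]
    (T : E →L[ℂ] E) : Prop :=
  IsClosed (LinearMap.range (T : E →ₗ[ℂ] E) : Set E) ∧ FiniteDimensional ℂ (E ⧸ LinearMap.range (T : E →ₗ[ℂ] E))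

/-- Fredholm operator. -/
def IsFredholmOp {E : Type*} [NormedAddCommGroup E] [InnerProductSpace ℂ E]
    (T : E →L[ℂ] E) : Prop :=
  IsUSF T ∧ IsLSF T

/-- `ind T ≤ 0`, i.e. `dim ker T ≤ codim ran T`. -/
def indexNonpos {E : Type*} [NormedAddCommGroup E] [InnerProductSpace ℂ E]
    (T : E →L[ℂ] E) : Prop :=
  Module.rank ℂ (LinearMap.ker (T : E →ₗ[ℂ] E)) ≤ Module.rank ℂ (E ⧸ LinearMap.range (T : E →ₗ[ℂ] E))

/-- `ind T = 0`, i.e. `dim ker T = codim ran T`. -/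
def indexZero {E : Type*} [NormedAddCommGroup E] [InnerProductSpace ℂ E]
    (T : E →L[ℂ] E) : Prop :=
  Module.rank ℂ (LinearMap.ker (T : E →ₗ[ℂ] E)) = Module.rank ℂ (E ⧸ LinearMap.range (T : E →ₗ[ℂ] E))

/-- The approximate point spectrum: `λ` such that `T - λ` is not bounded below. -/
def specA {E : Type*} [NormedAddCommGroup E] [InnerProductSpace ℂ E]
    (T : E →L[ℂ] E) : Set ℂ :=
  {lam | ¬ ∃ c > 0, ∀ x : E, c * ‖x‖ ≤ ‖T x - lam • x‖}

/-- The upper semi-Weyl spectrum. -/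
def specUW {E : Type*} [NormedAddCommGroup E] [InnerProductSpace ℂ E]
    (T : E →L[ℂ] E) : Set ℂ :=
  {lam | ¬ (IsUSF (opShift T lam) ∧ indexNonpos (opShift T lam))}

/-- The Weyl spectrum. -/
def specW {E : Type*} [NormedAddCommGroup E] [InnerProductSpace ℂ E]
    (T : E →L[ℂ] E) : Set ℂ :=
  {lam | ¬ (IsFredholmOp (opShift T lam) ∧ indexZero (opShift T lam))}

/-- `lam` is an isolated point of the set `S`. -/
def IsIsolatedIn (S : Set ℂ) (lam : ℂ) : Prop :=
  lam ∈ S ∧ ∃ ε > 0, S ∩ Metric.ball lam ε = {lam}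

/-- `E(T)`: the isolated points of the spectrum that are eigenvalues. -/
def Eset {E : Type*} [NormedAddCommGroup E] [InnerProductSpace ℂ E]
    (T : E →L[ℂ] E) : Set ℂ :=
  {lam | IsIsolatedIn (spectrum ℂ T) lam ∧ ∃ x : E, x ≠ 0 ∧ T x = lam • x}

/-- `E₀(T)`: the isolated points of the spectrum that are eigenvalues of finite multiplicity. -/
def E0set {E : Type*} [NormedAddCommGroup E] [InnerProductSpace ℂ E]
    (T : E →L[ℂ] E) : Set ℂ :=
  {lam | IsIsolatedIn (spectrum ℂ T) lam ∧ (∃ x : E, x ≠ 0 ∧ T x = lam • x) ∧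
    FiniteDimensional ℂ (LinearMap.ker ((opShift T lam : E →L[ℂ] E) : E →ₗ[ℂ] E))}

/-- Property `(UW_E)`: `σ_a(T) \ σ_uw(T) = E(T)`. -/
def PropUWE {E : Type*} [NormedAddCommGroup E] [InnerProductSpace ℂ E]
    (T : E →L[ℂ] E) : Prop :=
  specA T \ specUW T = Eset T

/-- Property `(V_E)`: `σ(T) \ σ_uw(T) = E(T)`. -/
def PropVE {E : Type*} [NormedAddCommGroup E] [InnerProductSpace ℂ E]
    (T : E →L[ℂ] E) : Prop :=
  spectrum ℂ T \ specUW T = Eset T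

/-- Property `(W_E)`: `σ(T) \ σ_w(T) = E(T)`. -/
def PropWE {E : Type*} [NormedAddCommGroup E] [InnerProductSpace ℂ E]
    (T : E →L[ℂ] E) : Prop :=
  spectrum ℂ T \ specW T = Eset T

/-- Weyl's theorem: `σ(T) \ σ_w(T) = E₀(T)`. -/
def WeylsTheorem {E : Type*} [NormedAddCommGroup E] [InnerProductSpace ℂ E]
    (T : E →L[ℂ] E) : Prop :=
  spectrum ℂ T \ specW T = E0set T

/-- `T` is hypercyclic: some orbit is dense. -/
def Hypercyclic {E : Type*} [NormedAddCommGroup E] [InnerProductSpace ℂ E]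
    (T : E →L[ℂ] E) : Prop :=
  ∃ x : E, Dense (Set.range fun n : ℕ => (T ^ n) x)

/-- `T` is supercyclic: the scaled orbit of some vector is dense. -/
def Supercyclic {E : Type*} [NormedAddCommGroup E] [InnerProductSpace ℂ E]
    (T : E →L[ℂ] E) : Prop :=
  ∃ x : E, Dense {y : E | ∃ (c : ℂ) (n : ℕ), y = c • (T ^ n) x}

/-- The ascent of `T`, as an extended natural number. -/
def ascent {E : Type*} [NormedAddCommGroup E] [InnerProductSpace ℂ E]
    (T : E →L[ℂ] E) : ℕ∞ :=
  sInf ((fun n : ℕ => (n : ℕ∞)) '' {n : ℕ | LinearMap.ker ((T ^ n : E →L[ℂ] E) : E →ₗ[ℂ] E) = LinearMap.ker ((T ^ (n + 1) : E →L[ℂ] E) : E →ₗ[ℂ] E)})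

/-- The descent of `T`, as an extended natural number. -/
def descent {E : Type*} [NormedAddCommGroup E] [InnerProductSpace ℂ E]
    (T : E →L[ℂ] E) : ℕ∞ :=
  sInf ((fun n : ℕ => (n : ℕ∞)) ''
    {n : ℕ | LinearMap.range ((T ^ n : E →L[ℂ] E) : E →ₗ[ℂ] E) = LinearMap.range ((T ^ (n + 1) : E →L[ℂ] E) : E →ₗ[ℂ] E)})

/-- Browder operator: Fredholm with equal finite ascent and descent. -/
def IsBrowder {E : Type*} [NormedAddCommGroup E] [InnerProductSpace ℂ E]
    (T : E →L[ℂ] E) : Prop :=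
  IsFredholmOp T ∧ ascent T = descent T ∧ ascent T < ⊤

/-- The Browder spectrum. -/
def specB {E : Type*} [NormedAddCommGroup E] [InnerProductSpace ℂ E]
    (T : E →L[ℂ] E) : Set ℂ :=
  {lam | ¬ IsBrowder (opShift T lam)}

/-- The essential spectrum. -/
def specE {E : Type*} [NormedAddCommGroup E] [InnerProductSpace ℂ E]
    (T : E →L[ℂ] E) : Set ℂ :=
  {lam | ¬ IsFredholmOp (opShift T lam)}

/-- The left essential spectrum. -/
def specLE {E : Type*} [NormedAddCommGroup E] [InnerProductSpace ℂ E]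
    (T : E →L[ℂ] E) : Set ℂ :=
  {lam | ¬ IsUSF (opShift T lam)}

/-- The right essential spectrum. -/
def specRE {E : Type*} [NormedAddCommGroup E] [InnerProductSpace ℂ E]
    (T : E →L[ℂ] E) : Set ℂ :=
  {lam | ¬ IsLSF (opShift T lam)}

/-
If `T - λ` had non-dense range, a nonzero functional `f` vanishing on it would satisfy
`f (Tⁿ x) = λⁿ f x`, so `f` would map a dense orbit onto the non-dense set `{λⁿ c}`. Hence every
`T - λ` of a hypercyclic operator has dense range; when the range is also closed, `T - λ` is onto,
and `ind (T - λ) ≤ 0` then forces it to be injective, so `λ ∉ σ(T)`. Thus `σ(T) ⊆ σ_uw(T)` and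
the left-hand side of property `(V_E)` is empty.
-/

theorem not_denseRange_pow_mul (μ c : ℂ) : ¬ DenseRange fun n : ℕ => μ ^ n * c := by
  intro hd
  by_cases hbdd : ‖μ‖ ≤ 1 ∨ c = 0
  · have hle : ∀ n : ℕ, ‖μ ^ n * c‖ ≤ ‖c‖ := by
      rcases hbdd with hμ | rfl
      · intro n
        rw [norm_mul, norm_pow]
        exact mul_le_of_le_one_left (norm_nonneg c) (pow_le_one₀ (norm_nonneg μ) hμ)
      · simp
    have hout : ((‖c‖ + 1 : ℝ) : ℂ) ∈ (Metric.closedBall (0 : ℂ) ‖c‖)ᶜ := by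
      rw [mem_compl_iff, mem_closedBall_zero_iff, Complex.norm_real,
        Real.norm_of_nonneg (by positivity)]
      linarith
    obtain ⟨n, hn⟩ := hd.exists_mem_open Metric.isClosed_closedBall.isOpen_compl ⟨_, hout⟩
    exact hn (mem_closedBall_zero_iff.mpr (hle n))
  · rw [not_or, not_le] at hbdd
    obtain ⟨hμ, hc⟩ := hbdd
    obtain ⟨n, hn⟩ := hd.exists_mem_open Metric.isOpen_ball
      ⟨0, Metric.mem_ball_self (norm_pos_iff.mpr hc)⟩
    have hge : ‖c‖ ≤ ‖μ ^ n * c‖ := by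
      rw [norm_mul, norm_pow]
      exact le_mul_of_one_le_left (norm_nonneg c) (one_le_pow₀ hμ.le)
    exact (mem_ball_zero_iff.mp hn).not_ge hge

theorem ContinuousLinearMap.eq_zero_of_denseRange_orbit {E : Type*} [AddCommGroup E] [Module ℂ E]
    [TopologicalSpace E] {T : E →L[ℂ] E} {x : E} (hx : DenseRange fun n : ℕ => (T ^ n) x)
    {f : E →L[ℂ] ℂ} {μ : ℂ} (hf : ∀ z, f (T z) = μ * f z) : f = 0 := by
  by_contra hf0
  have hsurj : Function.Surjective f :=
    (f : E →ₗ[ℂ] ℂ).surjective_or_eq_zero.resolve_right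
      fun h => hf0 (ContinuousLinearMap.coe_injective h)
  have horbit : ∀ n : ℕ, f ((T ^ n) x) = μ ^ n * f x := by
    intro n
    induction n with
    | zero => simp
    | succ n ih => rw [pow_succ', mul_apply_eq_comp, hf, ih, pow_succ', mul_assoc]
  refine not_denseRange_pow_mul μ (f x) ?_
  simpa only [Function.comp_def, horbit] using hsurj.denseRange.comp hx f.continuous

section Hilbert

variable {H : Type*} [NormedAddCommGroup H] [InnerProductSpace ℂ H]

theorem isUnit_opShift_iff {T : H →L[ℂ] H} {μ : ℂ} : IsUnit (opShift T μ) ↔ μ ∉ spectrum ℂ T := by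
  rw [spectrum.notMem_iff, ← IsUnit.neg_iff (algebraMap ℂ _ μ - T), neg_sub,
    Algebra.algebraMap_eq_smul_one]
  rfl

variable [CompleteSpace H]

theorem isUnit_of_surjective_of_indexNonpos {S : H →L[ℂ] H} (hS : Function.Surjective S)
    (hind : indexNonpos S) : IsUnit S := by
  have hrange : LinearMap.range (S : H →ₗ[ℂ] H) = ⊤ := LinearMap.range_eq_top.mpr hS
  have hker : LinearMap.ker (S : H →ₗ[ℂ] H) = ⊥ := by
    rw [← Submodule.rank_eq_zero]
    refine le_antisymm ?_ zero_le
    have : Subsingleton (H ⧸ LinearMap.range (S : H →ₗ[ℂ] H)) :=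
      Submodule.Quotient.subsingleton_iff.mpr hrange
    simpa [indexNonpos] using hind
  exact ContinuousLinearMap.isUnit_iff_bijective.mpr ⟨LinearMap.ker_eq_bot.mp hker, hS⟩

theorem Hypercyclic.denseRange_opShift {T : H →L[ℂ] H} (hT : Hypercyclic T) (μ : ℂ) :
    DenseRange (opShift T μ) := by
  obtain ⟨x, hx⟩ := hT
  change Dense (LinearMap.range (opShift T μ : H →ₗ[ℂ] H) : Set H)
  rw [Submodule.dense_iff_topologicalClosure_eq_top,
    Submodule.topologicalClosure_eq_top_iff, Submodule.eq_bot_iff]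
  intro y hy
  have hf : ∀ z, innerSL ℂ y (T z) = μ * innerSL ℂ y z := by
    intro z
    have := Submodule.inner_left_of_mem_orthogonal (LinearMap.mem_range_self _ z) hy
    simpa [opShift, inner_sub_right, inner_smul_right, sub_eq_zero] using this
  have := ContinuousLinearMap.eq_zero_of_denseRange_orbit hx hf
  simpa using congrArg (fun f => f y) this

theorem Hypercyclic.spectrum_subset_specUW {T : H →L[ℂ] H} (hT : Hypercyclic T) :
    spectrum ℂ T ⊆ specUW T := by
  rintro μ hμ ⟨⟨hclosed, -⟩, hind⟩
  have hsurj : Function.Surjective (opShift T μ) := by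
    rw [← Set.range_eq_univ, ← (hT.denseRange_opShift μ).closure_range]
    exact hclosed.closure_eq.symm
  exact isUnit_opShift_iff.mp (isUnit_of_surjective_of_indexNonpos hsurj hind) hμ

end Hilbert

theorem hypercyclic_propVE_iff_Eset_empty_general
    {H : Type*} [NormedAddCommGroup H] [InnerProductSpace ℂ H] [CompleteSpace H]
    (T : H →L[ℂ] H) (hT : Hypercyclic T) :
    PropVE T ↔ Eset T = ∅ := by
  rw [PropVE, Set.sdiff_eq_empty.mpr hT.spectrum_subset_specUW, eq_comm]

/-- a hypercyclic operator satisfies property `(V_E)` iff `E(T) = ∅`. -/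
theorem hypercyclic_propVE_iff_Eset_empty
    {H : Type*} [NormedAddCommGroup H] [InnerProductSpace ℂ H] [CompleteSpace H]
    [TopologicalSpace.SeparableSpace H] (hinf : ¬ FiniteDimensional ℂ H)
    (T : H →L[ℂ] H) (hT : Hypercyclic T) :
    PropVE T ↔ Eset T = ∅ :=
  hypercyclic_propVE_iff_Eset_empty_general T hT
end
end

section
/- Let W be the operator on ℓ²(ℕ) (with orthonormal basis (e_n)_{n≥0}) defined by W e₀ = 0 and W e_n = √(n/(n+1)) e_{n−1} for n ≥ 1. Then W satisfies property (V_E), and consequently property (UW_E); moreover the Weyl spectrum σ_w(W) and the upper semi-Weyl spectrum σ_uw(W) have no isolated points. -/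
noncomputable section

open Set MeasureTheory

/-- The Hilbert space `ℓ²(ℕ)`. -/
abbrev l2 := lp (fun _ : ℕ => ℂ) 2

/-!
`W` is a weighted backward shift with weights `√((k+1)/(k+2)) ∈ (0, 1)`, so `‖W‖ ≤ 1`, and for
`|λ| < 1` the sequence `λ^k √(k+1)` is an `ℓ²` eigenvector. Hence `σ(W)` is the closed unit disc,
which has no isolated points, so `E(W) = ∅`.

For `|λ| < 1` every `e_N` lies in the range of `W - λ` (the image of a truncated eigenvector, or
of `e_{N+1}` when `λ = 0`), so if that range were closed `W - λ` would be onto with a nonzero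
kernel, of positive index. For `|λ| = 1`, `W - λ` is injective but not bounded below: the truncated
eigenvectors have norm of order `N` while their images have norm `√(N+1)`. So its range is not
closed. Therefore `σ_uw(W) = σ_w(W) = σ(W)` is the closed disc, and as `σ_a(W) ⊆ σ(W)` both
properties reduce to `∅ = ∅`.
-/

section General

variable {E : Type*} [NormedAddCommGroup E] [InnerProductSpace ℂ E]

lemma opShift_apply (T : E →L[ℂ] E) (lam : ℂ) (x : E) : opShift T lam x = T x - lam • x := rfl

lemma isUnit_opShift_of_notMem_spectrum {T : E →L[ℂ] E} {lam : ℂ} (h : lam ∉ spectrum ℂ T) :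
    IsUnit (opShift T lam) := by
  rw [spectrum.notMem_iff] at h
  convert h.neg using 1
  rw [Algebra.algebraMap_eq_smul_one, opShift, neg_sub, ContinuousLinearMap.one_def]

lemma ker_eq_bot_and_range_eq_top_of_isUnit {T : E →L[ℂ] E} (h : IsUnit T) :
    LinearMap.ker (T : E →ₗ[ℂ] E) = ⊥ ∧ LinearMap.range (T : E →ₗ[ℂ] E) = ⊤ := by
  obtain ⟨u, rfl⟩ := h
  have hbij := (ContinuousLinearEquiv.ofUnit u).bijective
  exact ⟨LinearMap.ker_eq_bot.mpr hbij.1, LinearMap.range_eq_top.mpr hbij.2⟩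

lemma isFredholmOp_and_indexZero_of_isUnit {T : E →L[ℂ] E} (h : IsUnit T) :
    IsFredholmOp T ∧ indexZero T := by
  obtain ⟨hker, hrange⟩ := ker_eq_bot_and_range_eq_top_of_isUnit h
  have hclosed : IsClosed (LinearMap.range (T : E →ₗ[ℂ] E) : Set E) := by
    simp [hrange]
  have := Submodule.Quotient.subsingleton_iff.mpr hrange
  refine ⟨⟨⟨hclosed, ?_⟩, hclosed, inferInstance⟩, ?_⟩
  · rw [hker]; infer_instance
  · rw [indexZero, hker, rank_bot, rank_subsingleton']

lemma specW_subset_spectrum (T : E →L[ℂ] E) : specW T ⊆ spectrum ℂ T := fun _ hlam ↦ by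
  by_contra hT
  exact hlam (isFredholmOp_and_indexZero_of_isUnit (isUnit_opShift_of_notMem_spectrum hT))

lemma specUW_subset_specW (T : E →L[ℂ] E) : specUW T ⊆ specW T := fun _ hlam hW ↦
  hlam ⟨hW.1.1, hW.2.le⟩

lemma specA_subset_spectrum (T : E →L[ℂ] E) : specA T ⊆ spectrum ℂ T := by
  intro lam hlam
  by_contra hT
  obtain ⟨u, hu⟩ := isUnit_opShift_of_notMem_spectrum hT
  refine hlam ⟨(‖(↑u⁻¹ : E →L[ℂ] E)‖ + 1)⁻¹, by positivity, fun x ↦ ?_⟩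
  rw [inv_mul_le_iff₀ (by positivity), ← opShift_apply, ← hu]
  calc ‖x‖ = ‖(↑u⁻¹ : E →L[ℂ] E) ((u : E →L[ℂ] E) x)‖ := by
        simp [← ContinuousLinearMap.comp_apply, ← ContinuousLinearMap.mul_def]
    _ ≤ ‖(↑u⁻¹ : E →L[ℂ] E)‖ * ‖(u : E →L[ℂ] E) x‖ := ContinuousLinearMap.le_opNorm _ _
    _ ≤ (‖(↑u⁻¹ : E →L[ℂ] E)‖ + 1) * ‖(u : E →L[ℂ] E) x‖ := by gcongr; linarith

lemma ker_eq_bot_of_indexNonpos_of_range_eq_top {T : E →L[ℂ] E} (hind : indexNonpos T)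
    (hrange : LinearMap.range (T : E →ₗ[ℂ] E) = ⊤) : LinearMap.ker (T : E →ₗ[ℂ] E) = ⊥ := by
  have := Submodule.Quotient.subsingleton_iff.mpr hrange
  rw [indexNonpos, rank_subsingleton' ℂ (E ⧸ LinearMap.range (T : E →ₗ[ℂ] E)),
    nonpos_iff_eq_zero] at hind
  exact Submodule.rank_eq_zero.mp hind

lemma not_isUSF_opShift_of_mem_specA [CompleteSpace E] {T : E →L[ℂ] E} {lam : ℂ}
    (hlam : lam ∈ specA T) (hker : LinearMap.ker (opShift T lam : E →ₗ[ℂ] E) = ⊥) :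
    ¬ IsUSF (opShift T lam) := fun hT ↦
  hlam <| antilipschitzWith_iff_exists_mul_le_norm.mp <|
    (opShift T lam).antilipschitz_of_injective_of_isClosed_range (LinearMap.ker_eq_bot.mp hker) hT.1

lemma not_isIsolatedIn_of_preperfect {S : Set ℂ} (hS : Preperfect S) (lam : ℂ) :
    ¬ IsIsolatedIn S lam := by
  rintro ⟨hlam, ε, hε, hiso⟩
  obtain ⟨mu, ⟨hball, hmem⟩, hne⟩ :=
    preperfect_iff_nhds.mp hS lam hlam _ (Metric.ball_mem_nhds lam hε)
  exact hne (hiso.subset ⟨hmem, hball⟩)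

lemma Eset_eq_empty_of_preperfect {T : E →L[ℂ] E} (hT : Preperfect (spectrum ℂ T)) :
    Eset T = ∅ :=
  Set.eq_empty_of_forall_notMem fun lam hlam ↦ not_isIsolatedIn_of_preperfect hT lam hlam.1

end General

lemma preperfect_closedBall {F : Type*} [NormedAddCommGroup F] [NormedSpace ℝ F] [Nontrivial F]
    (x : F) {r : ℝ} (hr : r ≠ 0) : Preperfect (Metric.closedBall x r) := by
  rw [← closure_ball x hr]
  exact Metric.isOpen_ball.preperfect.perfect_closure.acc

section LpSpace

variable {ι : Type*} [DecidableEq ι] {p : ENNReal} [Fact (1 ≤ p)]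

local notation "ℓᵖ" => lp (fun _ : ι ↦ ℂ) p

lemma lp_range_eq_top_of_single_mem (hp : p ≠ ⊤) {T : ℓᵖ →L[ℂ] ℓᵖ}
    (hsingle : ∀ i a, lp.single p i a ∈ LinearMap.range (T : ℓᵖ →ₗ[ℂ] ℓᵖ))
    (hclosed : IsClosed (LinearMap.range (T : ℓᵖ →ₗ[ℂ] ℓᵖ) : Set ℓᵖ)) :
    LinearMap.range (T : ℓᵖ →ₗ[ℂ] ℓᵖ) = ⊤ := by
  refine Submodule.eq_top_iff'.mpr fun f ↦ hclosed.mem_of_tendsto (lp.hasSum_single hp f) ?_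
  exact .of_forall fun s ↦ Submodule.sum_mem _ fun i _ ↦ hsingle i (f i)

lemma lp_single_mem_range_of_single_mem {T : ℓᵖ →L[ℂ] ℓᵖ} {i : ι} {a : ℂ} (ha : a ≠ 0)
    (hsingle : lp.single p i a ∈ LinearMap.range (T : ℓᵖ →ₗ[ℂ] ℓᵖ)) (b : ℂ) :
    lp.single p i b ∈ LinearMap.range (T : ℓᵖ →ₗ[ℂ] ℓᵖ) := by
  have hb : (lp.single p i b : ℓᵖ) = (b / a) • lp.single p i a := by
    rw [← lp.single_smul, smul_eq_mul, div_mul_cancel₀ b ha]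
  exact hb ▸ Submodule.smul_mem _ _ hsingle

end LpSpace

namespace BergmanBackwardShift

lemma sqrt_weight_pos (k : ℕ) : 0 < √(((k : ℝ) + 1) / ((k : ℝ) + 2)) :=
  Real.sqrt_pos.mpr (by positivity)

lemma sqrt_weight_le_one (k : ℕ) : √(((k : ℝ) + 1) / ((k : ℝ) + 2)) ≤ 1 :=
  Real.sqrt_le_one.mpr ((div_le_one (by positivity)).mpr (by linarith))

lemma sqrt_weight_mul_sqrt (k : ℕ) :
    √(((k : ℝ) + 1) / ((k : ℝ) + 2)) * √((k : ℝ) + 2) = √((k : ℝ) + 1) := by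
  rw [← Real.sqrt_mul (by positivity), div_mul_cancel₀ _ (by positivity)]

def eigenCoeff (lam : ℂ) (k : ℕ) : ℂ := lam ^ k * √((k : ℝ) + 1)

lemma weight_mul_eigenCoeff_succ (lam : ℂ) (k : ℕ) :
    (√(((k : ℝ) + 1) / ((k : ℝ) + 2)) : ℂ) * eigenCoeff lam (k + 1) = lam * eigenCoeff lam k := by
  have h := congrArg (fun r : ℝ ↦ (r : ℂ)) (sqrt_weight_mul_sqrt k)
  simp only [Complex.ofReal_mul] at h
  rw [eigenCoeff, eigenCoeff, Nat.cast_succ, add_assoc, one_add_one_eq_two]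
  linear_combination lam ^ (k + 1) * h

lemma norm_eigenCoeff (lam : ℂ) (k : ℕ) : ‖eigenCoeff lam k‖ = ‖lam‖ ^ k * √((k : ℝ) + 1) := by
  rw [eigenCoeff, norm_mul, norm_pow, Complex.norm_real, Real.norm_of_nonneg (Real.sqrt_nonneg _)]

lemma norm_eigenCoeff_sq (lam : ℂ) (k : ℕ) :
    ‖eigenCoeff lam k‖ ^ 2 = ((k : ℝ) + 1) * (‖lam‖ ^ 2) ^ k := by
  rw [norm_eigenCoeff, mul_pow, Real.sq_sqrt (by positivity), ← pow_mul, ← pow_mul']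
  ring

lemma memℓp_eigenCoeff {lam : ℂ} (h : ‖lam‖ < 1) : Memℓp (eigenCoeff lam) 2 := by
  have hr : ‖(‖lam‖ ^ 2 : ℝ)‖ < 1 := by
    rw [norm_pow, norm_norm]
    exact pow_lt_one₀ (norm_nonneg _) h two_ne_zero
  refine memℓp_gen ?_
  have hsum := (summable_pow_mul_geometric_of_norm_lt_one 1 hr).add
    (summable_geometric_of_norm_lt_one hr)
  refine hsum.congr fun k ↦ ?_
  rw [ENNReal.toReal_ofNat, Real.rpow_two, norm_eigenCoeff_sq]
  ring

lemma one_le_norm_eigenCoeff {lam : ℂ} (h : 1 ≤ ‖lam‖) (k : ℕ) : 1 ≤ ‖eigenCoeff lam k‖ := by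
  rw [norm_eigenCoeff]
  exact one_le_mul_of_one_le_of_one_le (one_le_pow₀ h) (Real.one_le_sqrt.mpr (by simp))

def truncEigen (lam : ℂ) (N : ℕ) : l2 :=
  ∑ k ∈ Finset.range (N + 1), lp.single 2 k (eigenCoeff lam k)

lemma truncEigen_apply (lam : ℂ) (N k : ℕ) :
    truncEigen lam N k = if k ≤ N then eigenCoeff lam k else 0 := by
  rw [truncEigen, lp.coeFn_sum, Finset.sum_apply]
  simp [Finset.sum_pi_single]

lemma norm_truncEigen_sq {lam : ℂ} (h : ‖lam‖ = 1) (N : ℕ) :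
    2 * ‖truncEigen lam N‖ ^ 2 = ((N : ℝ) + 1) * ((N : ℝ) + 2) := by
  have hnorm := lp.norm_sum_single (E := fun _ : ℕ ↦ ℂ) (p := 2) (by norm_num) (eigenCoeff lam)
    (Finset.range (N + 1))
  simp only [ENNReal.toReal_ofNat, Real.rpow_two, norm_eigenCoeff_sq, h] at hnorm
  rw [truncEigen, hnorm]
  clear hnorm
  induction N with
  | zero => norm_num
  | succ N ih => rw [Finset.sum_range_succ, mul_add, ih]; push_cast; ring

section

variable {W : l2 →L[ℂ] l2}
  (hW : ∀ (x : l2) (k : ℕ), (W x) k = ((√(((k : ℝ) + 1) / ((k : ℝ) + 2)) : ℝ) : ℂ) * x (k + 1))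
include hW

lemma opShift_apply_coord (lam : ℂ) (x : l2) (k : ℕ) :
    opShift W lam x k = (√(((k : ℝ) + 1) / ((k : ℝ) + 2)) : ℂ) * x (k + 1) - lam * x k := by
  rw [opShift_apply, lp.coeFn_sub, lp.coeFn_smul, Pi.sub_apply, Pi.smul_apply, smul_eq_mul, hW]

lemma norm_le_one : ‖W‖ ≤ 1 := by
  refine W.opNorm_le_bound zero_le_one fun x ↦ ?_
  rw [one_mul]
  refine lp.norm_le_of_forall_sum_le (by norm_num) (norm_nonneg x) fun s ↦ ?_
  calc ∑ k ∈ s, ‖W x k‖ ^ (2 : ENNReal).toReal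
      ≤ ∑ k ∈ s, ‖x (k + 1)‖ ^ (2 : ENNReal).toReal := by
        gcongr with k
        rw [hW, norm_mul, Complex.norm_real, Real.norm_of_nonneg (Real.sqrt_nonneg _)]
        exact mul_le_of_le_one_left (norm_nonneg _) (sqrt_weight_le_one k)
    _ = ∑ k ∈ s.map (addRightEmbedding 1), ‖x k‖ ^ (2 : ENNReal).toReal := by
        rw [Finset.sum_map]; rfl
    _ ≤ ‖x‖ ^ (2 : ENNReal).toReal := lp.sum_rpow_le_norm_rpow (by norm_num) x _

lemma eq_eigenCoeff_of_opShift_eq_zero {lam : ℂ} {x : l2} (hx : opShift W lam x = 0) (k : ℕ) :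
    x k = eigenCoeff lam k * x 0 := by
  induction k with
  | zero => simp [eigenCoeff]
  | succ k ih =>
    have hk : opShift W lam x k = 0 := by rw [hx]; rfl
    rw [opShift_apply_coord hW, ih, sub_eq_zero] at hk
    have hw : (√(((k : ℝ) + 1) / ((k : ℝ) + 2)) : ℂ) ≠ 0 := by
      exact_mod_cast (sqrt_weight_pos k).ne'
    apply mul_left_cancel₀ hw
    linear_combination hk - x 0 * weight_mul_eigenCoeff_succ lam k

lemma ker_opShift_eq_bot {lam : ℂ} (h : 1 ≤ ‖lam‖) :
    LinearMap.ker (opShift W lam : l2 →ₗ[ℂ] l2) = ⊥ := by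
  refine (Submodule.eq_bot_iff _).mpr fun x hx ↦ ?_
  have hcoord := eq_eigenCoeff_of_opShift_eq_zero hW hx
  have hx0 : x 0 = 0 := by
    have htend := ((lp.memℓp x).summable (p := 2) (by norm_num)).tendsto_atTop_zero
    simp only [ENNReal.toReal_ofNat] at htend
    refine norm_eq_zero.mp (Real.rpow_eq_zero (norm_nonneg _) two_ne_zero |>.mp ?_)
    refine le_antisymm (ge_of_tendsto' htend fun k ↦ ?_) (by positivity)
    rw [hcoord k, norm_mul]
    gcongr
    exact le_mul_of_one_le_left (norm_nonneg _) (one_le_norm_eigenCoeff h k)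
  ext k
  rw [hcoord, hx0, mul_zero]; rfl

lemma opShift_truncEigen (lam : ℂ) (N : ℕ) :
    opShift W lam (truncEigen lam N) = lp.single 2 N (-(lam * eigenCoeff lam N)) := by
  ext k
  rw [opShift_apply_coord hW, truncEigen_apply, truncEigen_apply, lp.single_apply, Pi.single_apply]
  rcases lt_trichotomy k N with hk | rfl | hk
  · rw [if_pos (show k + 1 ≤ N from hk), if_pos hk.le, if_neg hk.ne, weight_mul_eigenCoeff_succ,
      sub_self]
  · simp
  · rw [if_neg (by omega), if_neg (by omega), if_neg hk.ne']
    ring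

lemma ker_opShift_ne_bot {lam : ℂ} (h : ‖lam‖ < 1) :
    LinearMap.ker (opShift W lam : l2 →ₗ[ℂ] l2) ≠ ⊥ := by
  set v : l2 := ⟨eigenCoeff lam, memℓp_eigenCoeff h⟩
  have hv : opShift W lam v = 0 := by
    ext k
    rw [opShift_apply_coord hW]
    exact (sub_eq_zero.mpr (weight_mul_eigenCoeff_succ lam k))
  have hv0 : v ≠ 0 := fun h0 ↦ by simpa [v, eigenCoeff] using congrArg (fun f : l2 ↦ f 0) h0
  exact (Submodule.ne_bot_iff _).mpr ⟨v, hv, hv0⟩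

lemma spectrum_eq_closedBall : spectrum ℂ W = Metric.closedBall 0 1 := by
  refine subset_antisymm (fun lam hlam ↦ ?_) ?_
  · rw [mem_closedBall_zero_iff]
    calc ‖lam‖ ≤ ‖W‖ * ‖(1 : l2 →L[ℂ] l2)‖ := spectrum.norm_le_norm_mul_of_mem hlam
      _ ≤ 1 * 1 := by gcongr; exacts [norm_le_one hW, ContinuousLinearMap.norm_id_le]
      _ = 1 := one_mul 1
  · rw [← closure_ball (0 : ℂ) one_ne_zero]
    refine closure_minimal (fun lam hlam hres ↦ ?_) (spectrum.isClosed W)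
    rw [mem_ball_zero_iff] at hlam
    have hunit := isUnit_opShift_of_notMem_spectrum (not_not.mpr hres)
    exact ker_opShift_ne_bot hW hlam (ker_eq_bot_and_range_eq_top_of_isUnit hunit).1

lemma single_mem_range_opShift (lam : ℂ) (N : ℕ) (a : ℂ) :
    lp.single 2 N a ∈ LinearMap.range (opShift W lam : l2 →ₗ[ℂ] l2) := by
  rcases eq_or_ne lam 0 with rfl | hlam
  · have hw : (√(((N : ℝ) + 1) / ((N : ℝ) + 2)) : ℂ) ≠ 0 := by
      exact_mod_cast (sqrt_weight_pos N).ne'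
    refine lp_single_mem_range_of_single_mem hw ⟨lp.single 2 (N + 1) 1, ?_⟩ a
    ext k
    rw [ContinuousLinearMap.coe_coe, opShift_apply_coord hW]
    by_cases hk : k = N
    · subst hk; simp
    · simp [lp.single_apply, Pi.single_apply, hk]
  · refine lp_single_mem_range_of_single_mem ?_ ⟨truncEigen lam N, opShift_truncEigen hW lam N⟩ a
    have he : eigenCoeff lam N ≠ 0 := mul_ne_zero (pow_ne_zero N hlam)
      (Complex.ofReal_ne_zero.mpr (Real.sqrt_pos.mpr (by positivity)).ne')
    exact neg_ne_zero.mpr (mul_ne_zero hlam he)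

lemma mem_specA_of_norm_eq_one {lam : ℂ} (h : ‖lam‖ = 1) : lam ∈ specA W := by
  rintro ⟨c, hc, hbound⟩
  obtain ⟨N, hN⟩ := exists_nat_gt (2 / c ^ 2)
  rw [div_lt_iff₀ (by positivity)] at hN
  have hT : ‖opShift W lam (truncEigen lam N)‖ = √((N : ℝ) + 1) := by
    rw [opShift_truncEigen hW, lp.norm_single (by norm_num), norm_neg, norm_mul, h, one_mul,
      norm_eigenCoeff, h, one_pow, one_mul]
  have hsq : c ^ 2 * ‖truncEigen lam N‖ ^ 2 ≤ (N : ℝ) + 1 := by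
    rw [← Real.sq_sqrt (by positivity : (0 : ℝ) ≤ N + 1), ← hT, ← mul_pow]
    exact pow_le_pow_left₀ (by positivity) (hbound _) 2
  nlinarith [norm_truncEigen_sq h N, mul_pos (by positivity : (0 : ℝ) < N + 1) (sub_pos.mpr hN)]

lemma specUW_eq_closedBall : specUW W = Metric.closedBall 0 1 := by
  refine subset_antisymm ((specUW_subset_specW W).trans
    ((specW_subset_spectrum W).trans (spectrum_eq_closedBall hW).subset)) fun lam hlam ↦ ?_
  rw [mem_closedBall_zero_iff] at hlam
  rintro ⟨hUSF, hind⟩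
  rcases hlam.lt_or_eq with hlt | heq
  · exact ker_opShift_ne_bot hW hlt <| ker_eq_bot_of_indexNonpos_of_range_eq_top hind <|
      lp_range_eq_top_of_single_mem (by norm_num) (single_mem_range_opShift hW lam) hUSF.1
  · exact not_isUSF_opShift_of_mem_specA (mem_specA_of_norm_eq_one hW heq)
      (ker_opShift_eq_bot hW heq.ge) hUSF

end

end BergmanBackwardShift

open BergmanBackwardShift in
/-- the weighted backward shift `W e₀ = 0`,
`W eₙ = √(n/(n+1)) e_{n-1}` for `n ≥ 1` (equivalently
`(Wx)ₖ = √((k+1)/(k+2)) x_{k+1}`) satisfies property `(V_E)`, hence property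
`(UW_E)`; moreover `σ_w(W)` and `σ_uw(W)` have no isolated points. -/
theorem stmt17_bergman_Tzbar_shift_example
    (W : l2 →L[ℂ] l2)
    (hW : ∀ (x : l2) (k : ℕ), (W x) k =
      ((Real.sqrt (((k : ℝ) + 1) / ((k : ℝ) + 2)) : ℝ) : ℂ) * x (k + 1)) :
    PropVE W ∧
    PropUWE W ∧
    (∀ lam : ℂ, ¬ IsIsolatedIn (specW W) lam) ∧
    (∀ lam : ℂ, ¬ IsIsolatedIn (specUW W) lam) := by
  have hσ := spectrum_eq_closedBall hW
  have hσuw := specUW_eq_closedBall hW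
  have hσw : specW W = Metric.closedBall 0 1 :=
    subset_antisymm (hσ ▸ specW_subset_spectrum W) (hσuw ▸ specUW_subset_specW W)
  have hE : Eset W = ∅ := Eset_eq_empty_of_preperfect (hσ ▸ preperfect_closedBall 0 one_ne_zero)
  refine ⟨?_, ?_, ?_, ?_⟩
  · rw [PropVE, hE, hσ, hσuw, sdiff_self]
  · rw [PropUWE, hE, hσuw, sdiff_eq_empty, ← hσ]
    exact specA_subset_spectrum W
  · exact hσw ▸ not_isIsolatedIn_of_preperfect (preperfect_closedBall 0 one_ne_zero)
  · exact hσuw ▸ not_isIsolatedIn_of_preperfect (preperfect_closedBall 0 one_ne_zero)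
end
end
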